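/- Suppose D = {(x_i, y_i)}_{i=1}^n is a dataset with n⁺ = |{i : y_i = 1}| > 0 positive examples, x is a point with reachable set R ⊆ R_A(x), and f : X → {0,1} is a classifier whose false negative rate over D satisfies FNR(f) < (1/n⁺) · |{i : x_i ∈ R ∧ y_i = 1}|. Then f provides recourse to x, i.e., there exists x' ∈ R_A(x) with f(x') = 1. -/
import Mathlib

open Classical

/-- Theorem 1: if the false negative rate of f over the dataset is less than the
fraction of positive examples lying in R ⊆ R_A(x), then f provides recourse to x. -/
theorem recourse_from_fnr_bound {X : Type*} (n : ℕ) (xs : Fin n → X)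
    (ys : Fin n → Bool) (f : X → Bool) (RA R : Set X) (hR : R ⊆ RA)
    (nplus : ℕ) (hnplus : nplus = (Finset.univ.filter fun i => ys i = true).card)
    (hpos : 0 < nplus)
    (hfnr : ((Finset.univ.filter fun i => ys i = true ∧ f (xs i) = false).card : ℚ) / nplus
        < ((Finset.univ.filter fun i => xs i ∈ R ∧ ys i = true).card : ℚ) / nplus) :
    ∃ x' ∈ RA, f x' = true := by
  have hcard : (Finset.univ.filter fun i => ys i = true ∧ f (xs i) = false).card
      < (Finset.univ.filter fun i => xs i ∈ R ∧ ys i = true).card := by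
    have := (div_lt_div_iff_of_pos_right (c := (nplus : ℚ)) (by exact_mod_cast hpos)).mp hfnr
    exact_mod_cast this
  by_contra h
  push_neg at h
  have hsub : (Finset.univ.filter fun i => xs i ∈ R ∧ ys i = true)
      ⊆ (Finset.univ.filter fun i => ys i = true ∧ f (xs i) = false) := by
    intro i hi
    simp only [Finset.mem_filter, Finset.mem_univ, true_and] at hi ⊢
    refine ⟨hi.2, ?_⟩
    have := h (xs i) (hR hi.1)
    simpa using this
  exact absurd (Finset.card_le_card hsub) (not_le.mpr hcard)
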